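/- Let (g,⟨·,·⟩,D,θ) be an h-graded (ℝ,ℤ₂)-equivariant metric Lie algebra. Let Der(g)ᴰ₋ := {φ : g → g linear : φ is a derivation, ⟨φx,y⟩ = −⟨x,φy⟩ for all x,y, φ∘D = D∘φ, θ∘φ = −φ∘θ}. Let Z² denote the space of alternating bilinear forms ω on g with ω([x,y],z) + ω([y,z],x) + ω([z,x],y) = 0 for all x,y,z, let B² := {ω : ∃ x₀ ∈ g with ω(x,y) = ⟨x₀,[x,y]⟩ for all x,y}, and let Z²ᴰ₋ (resp. B²ᴰ₋) be the set of ω in Z² (resp. B²) satisfying ω(Dx,y) + ω(x,Dy) = 0 and ω(θx,θy) = −ω(x,y) for all x,y. Then the map φ ↦ ω_φ with ω_φ(x,y) := ⟨φ(x),y⟩ is a linear bijection from the space of antisymmetric derivations of g onto Z², it maps ad(g) onto B² and Der(g)ᴰ₋ onto Z²ᴰ₋, one has Der(g)ᴰ₋ ∩ ad(g) = ad(g₋⁺) where g₋⁺ := ker(θ + id) ∩ ker D, and hence the map induces a linear isomorphism Out(g)ᴰ₋ := Der(g)ᴰ₋/ad(g₋⁺) ≅ H²(g,ℝ)ᴰ₋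 := Z²ᴰ₋/B²ᴰ₋. -/

import Mathlib

open LinearMap

/-- The map φ ↦ ω_φ = ⟨φ(·),·⟩. -/
def iota7 {g : Type*} [AddCommGroup g] [Module ℝ g]
    (B : LinearMap.BilinForm ℝ g) (φ : g →ₗ[ℝ] g) : LinearMap.BilinForm ℝ g :=
  B ∘ₗ φ

/-- The set of 2-cocycles on g with values in ℝ. -/
def Z2set (g : Type*) [LieRing g] [LieAlgebra ℝ g] : Set (LinearMap.BilinForm ℝ g) :=
  {ω | (∀ x, ω x x = 0) ∧ ∀ x y z : g, ω ⁅x, y⁆ z + ω ⁅y, z⁆ x + ω ⁅z, x⁆ y = 0}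

/-- The set of 2-coboundaries ω(x,y) = ⟨x₀,[x,y]⟩. -/
def B2set {g : Type*} [LieRing g] [LieAlgebra ℝ g] (B : LinearMap.BilinForm ℝ g) :
    Set (LinearMap.BilinForm ℝ g) :=
  {ω | ∃ x₀ : g, ∀ x y : g, ω x y = B x₀ ⁅x, y⁆}

/-- D-invariant and θ-anti-invariant bilinear forms. -/
def DThetaSet {g : Type*} [AddCommGroup g] [Module ℝ g] (D θ : g →ₗ[ℝ] g) :
    Set (LinearMap.BilinForm ℝ g) :=
  {ω | (∀ x y, ω (D x) y + ω x (D y) = 0) ∧ ∀ x y, ω (θ x) (θ y) = -(ω x y)}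

/-- Antisymmetric derivations of the metric Lie algebra (g,B). -/
def AntisymDer {g : Type*} [LieRing g] [LieAlgebra ℝ g] (B : LinearMap.BilinForm ℝ g) :
    Set (g →ₗ[ℝ] g) :=
  {φ | (∀ x y : g, φ ⁅x, y⁆ = ⁅φ x, y⁆ + ⁅x, φ y⁆) ∧ ∀ x y, B (φ x) y = -(B x (φ y))}

/-- Antisymmetric derivations commuting with D and anticommuting with θ. -/
def DerDm {g : Type*} [LieRing g] [LieAlgebra ℝ g] (B : LinearMap.BilinForm ℝ g)
    (D θ : g →ₗ[ℝ] g) : Set (g →ₗ[ℝ] g) :=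
  AntisymDer B ∩ {φ | φ ∘ₗ D = D ∘ₗ φ ∧ θ ∘ₗ φ = -(φ ∘ₗ θ)}

/-!
Nondegeneracy of ⟨·,·⟩ identifies an endomorphism φ with the form ω_φ = ⟨φ ·, ·⟩. Under this
identification, antisymmetry of φ is alternation of ω_φ, and (by invariance of ⟨·,·⟩) the
cyclic sum in the cocycle identity is ⟨φ[x,y] − [φx,y] − [x,φy], z⟩, so derivations correspond to
cocycles; likewise the D- and θ-conditions on ω_φ are the commutation conditions on φ.
For φ = ad x₀ these conditions say that D x₀ and θx₀ + x₀ are central. As D preserves the centre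
and D³ = −D, the element ½(1 − θ)(1 + D²)x₀ lies in g₋⁺ and differs from x₀ by a central element.
-/

section BilinForm

variable {g : Type*} [AddCommGroup g] [Module ℝ g] {B : LinearMap.BilinForm ℝ g}

@[simp]
theorem iota7_apply (φ : g →ₗ[ℝ] g) (x y : g) : iota7 B φ x y = B (φ x) y := rfl

theorem iota7_sub (φ ψ : g →ₗ[ℝ] g) : iota7 B (φ - ψ) = iota7 B φ - iota7 B ψ :=
  LinearMap.comp_sub ψ φ B

theorem iota7_injective (hnd : B.Nondegenerate) : Function.Injective (iota7 B) :=
  B.compLeft_injective hnd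

theorem iota7_surjective [FiniteDimensional ℝ g] (hnd : B.Nondegenerate) :
    Function.Surjective (iota7 B) := fun ω =>
  ⟨(B.toDual hnd).symm.toLinearMap ∘ₗ ω, by ext x y; simp⟩

theorem bijOn_iota7 [FiniteDimensional ℝ g] (hnd : B.Nondegenerate)
    {s : Set (g →ₗ[ℝ] g)} {t : Set (LinearMap.BilinForm ℝ g)}
    (h : ∀ φ, iota7 B φ ∈ t ↔ φ ∈ s) : Set.BijOn (iota7 B) s t := by
  refine ⟨fun φ hφ => (h φ).2 hφ, (iota7_injective hnd).injOn, fun ω hω => ?_⟩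
  obtain ⟨φ, rfl⟩ := iota7_surjective hnd ω
  exact ⟨φ, (h φ).1 hω, rfl⟩

theorem iota7_eq_zero_iff (hnd : B.Nondegenerate) {φ : g →ₗ[ℝ] g} :
    iota7 B φ = 0 ↔ φ = 0 :=
  (iota7_injective hnd).eq_iff' (LinearMap.comp_zero B)

theorem forall_iota7_self_eq_zero_iff (hsymm : ∀ x y, B x y = B y x) {φ : g →ₗ[ℝ] g} :
    (∀ x, iota7 B φ x x = 0) ↔ ∀ x y, B (φ x) y = -(B x (φ y)) := by
  refine ⟨fun h x y => ?_, fun h x => ?_⟩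
  · have hxy := h (x + y)
    simp only [iota7_apply, map_add, LinearMap.add_apply, h x, h y] at hxy
    linarith [hsymm x (φ y)]
  · show B (φ x) x = 0
    linarith [h x x, hsymm x (φ x)]

theorem iota7_invariant_iff_comp_comm (hnd : B.Nondegenerate) {D φ : g →ₗ[ℝ] g}
    (hDskew : ∀ x y, B (D x) y = -(B x (D y))) :
    (∀ x y, iota7 B φ (D x) y + iota7 B φ x (D y) = 0) ↔ φ ∘ₗ D = D ∘ₗ φ := by
  rw [← sub_eq_zero, ← iota7_eq_zero_iff hnd, LinearMap.ext_iff₂]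
  simp [hDskew, sub_eq_add_neg]

theorem iota7_anti_invariant_iff_comp_anticomm (hnd : B.Nondegenerate) {θ φ : g →ₗ[ℝ] g}
    (hθ2 : θ ∘ₗ θ = LinearMap.id) (hθiso : ∀ x y, B (θ x) (θ y) = B x y) :
    (∀ x y, iota7 B φ (θ x) (θ y) = -(iota7 B φ x y)) ↔ θ ∘ₗ φ = -(φ ∘ₗ θ) := by
  have hθθ : ∀ x, θ (θ x) = x := LinearMap.congr_fun hθ2
  have hmove : ∀ x y, B x (θ y) = B (θ x) y := fun x y => by
    rw [← hθiso x (θ y), hθθ]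
  have hconj : θ ∘ₗ φ = -(φ ∘ₗ θ) ↔ θ ∘ₗ φ ∘ₗ θ + φ = 0 := by
    constructor <;> intro h <;> ext x <;>
      simpa [hθθ, add_eq_zero_iff_eq_neg] using congr($h (θ x))
  rw [hconj, ← iota7_eq_zero_iff hnd, LinearMap.ext_iff₂]
  simp [hmove, add_eq_zero_iff_eq_neg]

theorem iota7_mem_DThetaSet_iff (hnd : B.Nondegenerate) {D θ φ : g →ₗ[ℝ] g}
    (hDskew : ∀ x y, B (D x) y = -(B x (D y)))
    (hθ2 : θ ∘ₗ θ = LinearMap.id) (hθiso : ∀ x y, B (θ x) (θ y) = B x y) :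
    iota7 B φ ∈ DThetaSet D θ ↔ φ ∘ₗ D = D ∘ₗ φ ∧ θ ∘ₗ φ = -(φ ∘ₗ θ) :=
  and_congr (iota7_invariant_iff_comp_comm hnd hDskew)
    (iota7_anti_invariant_iff_comp_anticomm hnd hθ2 hθiso)

end BilinForm

section Lie

variable {g : Type*} [LieRing g] [LieAlgebra ℝ g] {B : LinearMap.BilinForm ℝ g}

theorem lie_apply_eq_apply_lie (hinv : ∀ x y z : g, B ⁅x, y⁆ z + B y ⁅x, z⁆ = 0)
    (x y z : g) : B ⁅x, y⁆ z = B x ⁅y, z⁆ := by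
  have h := hinv y x z
  rw [← lie_skew, map_neg, LinearMap.neg_apply] at h
  linarith

theorem apply_lie_cyclic_sum_eq (hsymm : ∀ x y, B x y = B y x)
    (hinv : ∀ x y z : g, B ⁅x, y⁆ z + B y ⁅x, z⁆ = 0) {φ : g →ₗ[ℝ] g}
    (hφ : ∀ x y, B (φ x) y = -(B x (φ y))) (x y z : g) :
    B (φ ⁅x, y⁆) z + B (φ ⁅y, z⁆) x + B (φ ⁅z, x⁆) y =
      B (φ ⁅x, y⁆ - ⁅φ x, y⁆ - ⁅x, φ y⁆) z := by
  have hyz : B (φ ⁅y, z⁆) x = -B ⁅φ x, y⁆ z := by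
    rw [hφ, hsymm, lie_apply_eq_apply_lie hinv]
  have hzx : B (φ ⁅z, x⁆) y = -B ⁅x, φ y⁆ z := by
    rw [hφ, lie_apply_eq_apply_lie hinv, hsymm, ← lie_skew, map_neg, LinearMap.neg_apply]
  rw [hyz, hzx, map_sub, map_sub, LinearMap.sub_apply, LinearMap.sub_apply]
  ring

theorem iota7_mem_Z2set_iff (hsymm : ∀ x y, B x y = B y x) (hnd : B.Nondegenerate)
    (hinv : ∀ x y z : g, B ⁅x, y⁆ z + B y ⁅x, z⁆ = 0) {φ : g →ₗ[ℝ] g} :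
    iota7 B φ ∈ Z2set g ↔ φ ∈ AntisymDer B := by
  simp only [Z2set, AntisymDer, Set.mem_ofPred_eq]
  rw [forall_iota7_self_eq_zero_iff hsymm, and_comm]
  refine and_congr_left fun hφ => forall₂_congr fun x y => ?_
  simp only [iota7_apply, apply_lie_cyclic_sum_eq hsymm hinv hφ, sub_sub,
    ← sub_eq_zero (a := φ ⁅x, y⁆)]
  exact ⟨hnd.1 _, fun h z => by rw [h, map_zero, LinearMap.zero_apply]⟩

theorem iota7_mem_B2set_iff (hnd : B.Nondegenerate)
    (hinv : ∀ x y z : g, B ⁅x, y⁆ z + B y ⁅x, z⁆ = 0) {φ : g →ₗ[ℝ] g} :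
    iota7 B φ ∈ B2set B ↔ ∃ x₀ : g, ∀ y, φ y = ⁅x₀, y⁆ := by
  refine exists_congr fun x₀ => ?_
  have h := (iota7_injective hnd).eq_iff (a := φ) (b := LieAlgebra.ad ℝ g x₀)
  simp only [LinearMap.ext_iff, iota7_apply, LieAlgebra.ad_apply] at h
  simpa only [iota7_apply, ← lie_apply_eq_apply_lie hinv] using h

section Inner

variable {D θ φ : g →ₗ[ℝ] g} {x₀ : g}

theorem lie_apply_eq_zero_of_derivation (hDder : ∀ x y : g, D ⁅x, y⁆ = ⁅D x, y⁆ + ⁅x, D y⁆)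
    {c : g} (hc : ∀ w : g, ⁅c, w⁆ = 0) (w : g) : ⁅D c, w⁆ = 0 := by
  simpa [hc] using (hDder c w).symm

theorem comp_comm_iff_of_inner (hDder : ∀ x y : g, D ⁅x, y⁆ = ⁅D x, y⁆ + ⁅x, D y⁆)
    (hφ : ∀ y, φ y = ⁅x₀, y⁆) : φ ∘ₗ D = D ∘ₗ φ ↔ ∀ w : g, ⁅D x₀, w⁆ = 0 := by
  refine LinearMap.ext_iff.trans (forall_congr' fun w => ?_)
  rw [LinearMap.comp_apply, LinearMap.comp_apply, hφ, hφ, hDder, eq_comm, add_eq_right]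

theorem comp_anticomm_iff_of_inner (hθ2 : θ ∘ₗ θ = LinearMap.id)
    (hθlie : ∀ x y : g, θ ⁅x, y⁆ = ⁅θ x, θ y⁆) (hφ : ∀ y, φ y = ⁅x₀, y⁆) :
    θ ∘ₗ φ = -(φ ∘ₗ θ) ↔ ∀ w : g, ⁅θ x₀ + x₀, w⁆ = 0 := by
  have hθθ : ∀ v, θ (θ v) = v := LinearMap.congr_fun hθ2
  have hθsurj : Function.Surjective θ := fun w => ⟨θ w, hθθ w⟩
  refine (LinearMap.ext_iff.trans hθsurj.forall).trans (forall_congr' fun w => ?_)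
  simp only [LinearMap.comp_apply, LinearMap.neg_apply, hφ, hθlie, hθθ,
    add_lie, eq_neg_iff_add_eq_zero]

theorem mem_AntisymDer_of_inner (hinv : ∀ x y z : g, B ⁅x, y⁆ z + B y ⁅x, z⁆ = 0)
    (hφ : ∀ y, φ y = ⁅x₀, y⁆) : φ ∈ AntisymDer B :=
  ⟨fun x y => by rw [hφ, hφ, hφ, leibniz_lie],
    fun x y => by rw [hφ, hφ]; linarith [hinv x₀ x y]⟩

theorem exists_mem_ker_inf_ker_lie_eq (hDder : ∀ x y : g, D ⁅x, y⁆ = ⁅D x, y⁆ + ⁅x, D y⁆)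
    (hD3 : D ∘ₗ D ∘ₗ D = -D) (hθ2 : θ ∘ₗ θ = LinearMap.id) (hDθ : D ∘ₗ θ = -(θ ∘ₗ D))
    (hD : ∀ w : g, ⁅D x₀, w⁆ = 0) (hθ : ∀ w : g, ⁅θ x₀ + x₀, w⁆ = 0) :
    ∃ x₁ ∈ LinearMap.ker (θ + LinearMap.id) ⊓ LinearMap.ker D, ∀ y : g, ⁅x₁, y⁆ = ⁅x₀, y⁆ := by
  have hθθ : ∀ v, θ (θ v) = v := LinearMap.congr_fun hθ2
  have hDθ' : ∀ v, D (θ v) = -θ (D v) := by simpa using LinearMap.congr_fun hDθ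
  have hD3' : ∀ v, D (D (D v)) = -D v := by simpa using LinearMap.congr_fun hD3
  have hcentral := @lie_apply_eq_zero_of_derivation g _ _ D hDder
  set x₁ := x₀ + D (D x₀)
  have hDx₁ : D x₁ = 0 := by simp [x₁, hD3']
  have hx₁ : ∀ y : g, ⁅x₁, y⁆ = ⁅x₀, y⁆ := fun y => by simp [x₁, add_lie, hcentral hD y]
  have hθx₁ : ∀ y : g, ⁅θ x₁ + x₁, y⁆ = 0 := fun y => by
    have : θ x₁ + x₁ = (θ x₀ + x₀) + D (D (θ x₀ + x₀)) := by
      simp only [x₁, map_add, hDθ', map_neg, neg_neg]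
      abel
    rw [this, add_lie, hθ, hcentral (hcentral hθ), add_zero]
  refine ⟨(1 / 2 : ℝ) • (x₁ - θ x₁), ⟨?_, ?_⟩, fun y => ?_⟩
  · simp [hθθ]
  · simp [hDθ', hDx₁]
  · have : (1 / 2 : ℝ) • (x₁ - θ x₁) = x₁ - (1 / 2 : ℝ) • (θ x₁ + x₁) := by module
    rw [this, sub_lie, smul_lie, hθx₁, smul_zero, sub_zero, hx₁]

theorem comm_and_anticomm_iff_of_inner (hDder : ∀ x y : g, D ⁅x, y⁆ = ⁅D x, y⁆ + ⁅x, D y⁆)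
    (hD3 : D ∘ₗ D ∘ₗ D = -D) (hθ2 : θ ∘ₗ θ = LinearMap.id)
    (hθlie : ∀ x y : g, θ ⁅x, y⁆ = ⁅θ x, θ y⁆) (hDθ : D ∘ₗ θ = -(θ ∘ₗ D))
    (hφ : ∀ y, φ y = ⁅x₀, y⁆) :
    (φ ∘ₗ D = D ∘ₗ φ ∧ θ ∘ₗ φ = -(φ ∘ₗ θ)) ↔
      ∃ x₁ ∈ LinearMap.ker (θ + LinearMap.id) ⊓ LinearMap.ker D, ∀ y, φ y = ⁅x₁, y⁆ := by
  constructor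
  · rw [comp_comm_iff_of_inner hDder hφ, comp_anticomm_iff_of_inner hθ2 hθlie hφ]
    rintro ⟨hD, hθ⟩
    obtain ⟨x₁, hx₁, hlie⟩ := exists_mem_ker_inf_ker_lie_eq hDder hD3 hθ2 hDθ hD hθ
    exact ⟨x₁, hx₁, fun y => (hφ y).trans (hlie y).symm⟩
  · rintro ⟨x₁, hx₁, hφ₁⟩
    simp only [Submodule.mem_inf, LinearMap.mem_ker, LinearMap.add_apply,
      LinearMap.id_apply] at hx₁
    rw [comp_comm_iff_of_inner hDder hφ₁, comp_anticomm_iff_of_inner hθ2 hθlie hφ₁, hx₁.1, hx₁.2]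
    simp

theorem DerDm_inter_inner_eq (hinv : ∀ x y z : g, B ⁅x, y⁆ z + B y ⁅x, z⁆ = 0)
    (hDder : ∀ x y : g, D ⁅x, y⁆ = ⁅D x, y⁆ + ⁅x, D y⁆) (hD3 : D ∘ₗ D ∘ₗ D = -D)
    (hθ2 : θ ∘ₗ θ = LinearMap.id) (hθlie : ∀ x y : g, θ ⁅x, y⁆ = ⁅θ x, θ y⁆)
    (hDθ : D ∘ₗ θ = -(θ ∘ₗ D)) :
    DerDm B D θ ∩ {φ : g →ₗ[ℝ] g | ∃ x₀ : g, ∀ y, φ y = ⁅x₀, y⁆} =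
      {φ : g →ₗ[ℝ] g | ∃ x₀ ∈ LinearMap.ker (θ + LinearMap.id) ⊓ LinearMap.ker D,
        ∀ y, φ y = ⁅x₀, y⁆} := by
  ext φ
  constructor
  · rintro ⟨⟨-, hcomm⟩, x₀, hφ⟩
    exact (comm_and_anticomm_iff_of_inner hDder hD3 hθ2 hθlie hDθ hφ).1 hcomm
  · rintro ⟨x₀, hx₀, hφ⟩
    exact ⟨⟨mem_AntisymDer_of_inner hinv hφ,
      (comm_and_anticomm_iff_of_inner hDder hD3 hθ2 hθlie hDθ hφ).2 ⟨x₀, hx₀, hφ⟩⟩, x₀, hφ⟩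

theorem exists_mem_ker_inf_ker_sub_iff (hnd : B.Nondegenerate)
    (hinv : ∀ x y z : g, B ⁅x, y⁆ z + B y ⁅x, z⁆ = 0)
    (hDder : ∀ x y : g, D ⁅x, y⁆ = ⁅D x, y⁆ + ⁅x, D y⁆)
    (hDskew : ∀ x y, B (D x) y = -(B x (D y))) (hD3 : D ∘ₗ D ∘ₗ D = -D)
    (hθ2 : θ ∘ₗ θ = LinearMap.id) (hθlie : ∀ x y : g, θ ⁅x, y⁆ = ⁅θ x, θ y⁆)
    (hθiso : ∀ x y, B (θ x) (θ y) = B x y) (hDθ : D ∘ₗ θ = -(θ ∘ₗ D)) {ψ : g →ₗ[ℝ] g}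
    (hφ : φ ∈ DerDm B D θ) (hψ : ψ ∈ DerDm B D θ) :
    (∃ x₀ ∈ LinearMap.ker (θ + LinearMap.id) ⊓ LinearMap.ker D, ∀ y, φ y - ψ y = ⁅x₀, y⁆) ↔
      iota7 B φ - iota7 B ψ ∈ B2set B ∩ DThetaSet D θ := by
  obtain ⟨-, hφD, hφθ⟩ := hφ
  obtain ⟨-, hψD, hψθ⟩ := hψ
  have hcomm : (φ - ψ) ∘ₗ D = D ∘ₗ (φ - ψ) ∧ θ ∘ₗ (φ - ψ) = -((φ - ψ) ∘ₗ θ) := by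
    rw [LinearMap.sub_comp, LinearMap.comp_sub, hφD, hψD, LinearMap.comp_sub,
      LinearMap.sub_comp, hφθ, hψθ, neg_sub_neg, neg_sub]
    exact ⟨rfl, rfl⟩
  rw [← iota7_sub, Set.mem_inter_iff, iota7_mem_B2set_iff hnd hinv,
    iota7_mem_DThetaSet_iff hnd hDskew hθ2 hθiso, and_iff_left hcomm]
  constructor
  · rintro ⟨x₀, -, h⟩
    exact ⟨x₀, h⟩
  · rintro ⟨x₀, h⟩
    exact (comm_and_anticomm_iff_of_inner hDder hD3 hθ2 hθlie hDθ h).1 hcomm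

end Inner

end Lie

theorem stmt7 {g : Type*} [LieRing g] [LieAlgebra ℝ g] [Module.Finite ℝ g]
    (B : LinearMap.BilinForm ℝ g)
    (hsymm : ∀ x y, B x y = B y x)
    (hnd : B.Nondegenerate)
    (hinv : ∀ x y z : g, B ⁅x, y⁆ z + B y ⁅x, z⁆ = 0)
    (D : g →ₗ[ℝ] g)
    (hDder : ∀ x y : g, D ⁅x, y⁆ = ⁅D x, y⁆ + ⁅x, D y⁆)
    (hDskew : ∀ x y, B (D x) y = -(B x (D y)))
    (hD3 : D ∘ₗ D ∘ₗ D = -D)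
    (θ : g →ₗ[ℝ] g)
    (hθ2 : θ ∘ₗ θ = LinearMap.id)
    (hθlie : ∀ x y : g, θ ⁅x, y⁆ = ⁅θ x, θ y⁆)
    (hθiso : ∀ x y, B (θ x) (θ y) = B x y)
    (hDθ : D ∘ₗ θ = -(θ ∘ₗ D)) :
    (∀ φ ψ : g →ₗ[ℝ] g, iota7 B (φ + ψ) = iota7 B φ + iota7 B ψ) ∧
      (∀ (c : ℝ) (φ : g →ₗ[ℝ] g), iota7 B (c • φ) = c • iota7 B φ) ∧
      Set.BijOn (iota7 B) (AntisymDer B) (Z2set g) ∧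
      iota7 B '' {φ : g →ₗ[ℝ] g | ∃ x₀ : g, ∀ y, φ y = ⁅x₀, y⁆} = B2set B ∧
      Set.BijOn (iota7 B) (DerDm B D θ) (Z2set g ∩ DThetaSet D θ) ∧
      DerDm B D θ ∩ {φ : g →ₗ[ℝ] g | ∃ x₀ : g, ∀ y, φ y = ⁅x₀, y⁆} =
        {φ : g →ₗ[ℝ] g | ∃ x₀ ∈ LinearMap.ker (θ + LinearMap.id) ⊓ LinearMap.ker D,
          ∀ y, φ y = ⁅x₀, y⁆} ∧
      (∀ φ ∈ DerDm B D θ, ∀ ψ ∈ DerDm B D θ,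
        ((∃ x₀ ∈ LinearMap.ker (θ + LinearMap.id) ⊓ LinearMap.ker D,
            ∀ y, φ y - ψ y = ⁅x₀, y⁆) ↔
          iota7 B φ - iota7 B ψ ∈ B2set B ∩ DThetaSet D θ)) := by
  have hZ2 (φ : g →ₗ[ℝ] g) := iota7_mem_Z2set_iff hsymm hnd hinv (φ := φ)
  have hDθset (φ : g →ₗ[ℝ] g) := iota7_mem_DThetaSet_iff hnd hDskew hθ2 hθiso (φ := φ)
  refine ⟨fun φ ψ => LinearMap.comp_add φ ψ B, fun c φ => LinearMap.comp_smul B c φ,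
    bijOn_iota7 hnd hZ2, (bijOn_iota7 hnd fun _ => iota7_mem_B2set_iff hnd hinv).image_eq,
    bijOn_iota7 hnd fun φ => and_congr (hZ2 φ) (hDθset φ),
    DerDm_inter_inner_eq hinv hDder hD3 hθ2 hθlie hDθ, fun φ hφ ψ hψ =>
    exists_mem_ker_inf_ker_sub_iff hnd hinv hDder hDskew hD3 hθ2 hθlie hθiso hDθ hφ hψ⟩
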